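/- arXiv:1612.08393 — 2 statements merged into one kernel-verified Lean document; each statement's English description precedes it below -/
import Mathlib

section
/- Weak* convergence of periodic-window indicator functions to a constant: Fix S < T and λ ∈ [0,1]. For each positive integer n define A_{n,λ} := ⋃_{k=0}^{n−1} [S + k(T−S)/n, S + (k+λ)(T−S)/n]. Then for every Lebesgue-integrable function g : [S,T] → ℝ, ∫_{A_{n,λ}} g(t) dt → λ · ∫_S^T g(t) dt as n → ∞. -/
/-!
With `h = (T - S)/n` and `a_k = S + k h`, the affine map `x ↦ a_k + λ (x - a_k)` carries the cell
`[a_k, a_k + h]` onto the window `[a_k, a_k + λ h]` and moves points by at most `h`. Hence for a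
uniformly continuous `f` the window integral is `λ ∫_{a_k}^{a_k + h} f` up to `λ h ω_f(h)`, and
summing over the `n` cells gives `|∫_{A_{n,λ}} f - λ ∫_S^T f| ≤ λ (T - S) ω_f(h) → 0`.
Both `g ↦ ∫_{A_{n,λ}} g` and `g ↦ λ ∫_S^T g` are bounded by the `L¹` norm uniformly in `n`, so
the convergence extends from continuous compactly supported functions, which are dense in `L¹`,
to every integrable `g`.
-/

open MeasureTheory Set Filter Topology

section Density

variable {α E ι : Type*} [MeasurableSpace α] [NormedAddCommGroup E]
  [NormedSpace ℝ E] {μ : Measure α}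

theorem norm_setIntegral_sub_setIntegral_le {f g : α → E} (hf : Integrable f μ)
    (hg : Integrable g μ) (s : Set α) :
    ‖∫ x in s, f x ∂μ - ∫ x in s, g x ∂μ‖ ≤ ∫ x, ‖f x - g x‖ ∂μ :=
  calc ‖∫ x in s, f x ∂μ - ∫ x in s, g x ∂μ‖
      = ‖∫ x in s, (f x - g x) ∂μ‖ := by rw [integral_sub hf.integrableOn hg.integrableOn]
    _ ≤ ∫ x in s, ‖f x - g x‖ ∂μ := norm_integral_le_integral_norm _
    _ ≤ ∫ x, ‖f x - g x‖ ∂μ :=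
      setIntegral_le_integral (hf.sub hg).norm (.of_forall fun _ ↦ norm_nonneg _)

theorem tendsto_setIntegral_of_forall_hasCompactSupport [TopologicalSpace α] [NormalSpace α]
    [BorelSpace α] [R1Space α] [WeaklyLocallyCompactSpace α] [μ.Regular] {l : Filter ι}
    {A : ι → Set α} {s : Set α} {c : ℝ}
    (h : ∀ f : α → E, Continuous f → HasCompactSupport f →
      Tendsto (fun i ↦ ∫ x in A i, f x ∂μ) l (𝓝 (c • ∫ x in s, f x ∂μ)))
    {g : α → E} (hg : Integrable g μ) :
    Tendsto (fun i ↦ ∫ x in A i, g x ∂μ) l (𝓝 (c • ∫ x in s, g x ∂μ)) := by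
  rw [Metric.tendsto_nhds]
  intro ε hε
  set η := ε / (2 * (1 + |c|))
  obtain ⟨f, hf_supp, hgf, hf_cont, hf_int⟩ :=
    hg.exists_hasCompactSupport_integral_sub_le (by positivity : 0 < η)
  filter_upwards [Metric.tendsto_nhds.1 (h f hf_cont hf_supp) (ε / 2) (half_pos hε)] with i hi
  have hA : dist (∫ x in A i, g x ∂μ) (∫ x in A i, f x ∂μ) ≤ η :=
    (dist_eq_norm _ _).trans_le ((norm_setIntegral_sub_setIntegral_le hg hf_int _).trans hgf)
  have hs : dist (c • ∫ x in s, f x ∂μ) (c • ∫ x in s, g x ∂μ) ≤ |c| * η := by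
    rw [dist_smul₀, dist_comm, Real.norm_eq_abs, dist_eq_norm]
    exact mul_le_mul_of_nonneg_left
      ((norm_setIntegral_sub_setIntegral_le hg hf_int _).trans hgf) (abs_nonneg c)
  calc dist (∫ x in A i, g x ∂μ) (c • ∫ x in s, g x ∂μ)
      ≤ dist (∫ x in A i, g x ∂μ) (∫ x in A i, f x ∂μ)
        + dist (∫ x in A i, f x ∂μ) (c • ∫ x in s, f x ∂μ)
        + dist (c • ∫ x in s, f x ∂μ) (c • ∫ x in s, g x ∂μ) := dist_triangle4 _ _ _ _
    _ < η + ε / 2 + |c| * η := by linarith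
    _ = ε := by
      have : η * (2 * (1 + |c|)) = ε := div_mul_cancel₀ _ (by positivity)
      linarith

end Density

theorem integral_biUnion_Icc_eq_sum {f : ℝ → ℝ} {a b : ℕ → ℝ} (hab : ∀ k, a k ≤ b k)
    (hba : ∀ k, b k ≤ a (k + 1)) (hf : ∀ k, IntegrableOn f (Icc (a k) (b k))) (n : ℕ) :
    ∫ x in ⋃ k ∈ Finset.range n, Icc (a k) (b k), f x
      = ∑ k ∈ Finset.range n, ∫ x in a k..b k, f x := by
  have ha : Monotone a := monotone_nat_of_le_succ fun k ↦ (hab k).trans (hba k)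
  have hdisj : Pairwise (Function.onFun Disjoint fun k ↦ Ioc (a k) (b k)) :=
    (pairwise_disjoint_on _).2 fun i j hij ↦
      Ioc_disjoint_Ioc_of_le ((hba i).trans (ha (Nat.succ_le_of_lt hij)))
  have hae : (⋃ k ∈ Finset.range n, Icc (a k) (b k) : Set ℝ)
      =ᵐ[volume] ⋃ k ∈ Finset.range n, Ioc (a k) (b k) :=
    Filter.EventuallyEq.countable_bUnion (Finset.range n).countable_toSet
      fun _ _ ↦ Ioc_ae_eq_Icc.symm
  rw [setIntegral_congr_set hae,
    integral_biUnion_finset _ (fun k _ ↦ measurableSet_Ioc) (hdisj.set_pairwise _)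
      fun k _ ↦ (hf k).mono_set Ioc_subset_Icc_self]
  exact Finset.sum_congr rfl fun k _ ↦ (intervalIntegral.integral_of_le (hab k)).symm

/-- The set `A_{n,λ}`. -/
def periodicWindows (S T lam : ℝ) (n : ℕ) : Set ℝ :=
  ⋃ k ∈ Finset.range n,
    Icc (S + (k : ℝ) * (T - S) / (n : ℝ)) (S + ((k : ℝ) + lam) * (T - S) / (n : ℝ))

theorem periodicWindows_subset_Icc {S T lam : ℝ} (hST : S ≤ T) (hlam : lam ∈ Icc (0 : ℝ) 1)
    (n : ℕ) : periodicWindows S T lam n ⊆ Icc S T := by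
  simp only [periodicWindows, iUnion_subset_iff, Finset.mem_range]
  intro k hk
  have hn : (0 : ℝ) < n := by exact_mod_cast (Nat.zero_le k).trans_lt hk
  have hkn : (k : ℝ) + 1 ≤ n := by exact_mod_cast hk
  apply Icc_subset_Icc
  · have : 0 ≤ (k : ℝ) * (T - S) / n := by have := sub_nonneg.2 hST; positivity
    linarith
  · have : ((k : ℝ) + lam) * (T - S) / n ≤ T - S := by
      rw [div_le_iff₀ hn]; nlinarith [sub_nonneg.2 hST, hlam.2]
    linarith

theorem abs_intervalIntegral_window_sub_le {f : ℝ → ℝ} (hf : Continuous f) {δ ε : ℝ}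
    (hfδ : ∀ x y, dist x y < δ → dist (f x) (f y) < ε) {lam h : ℝ}
    (hlam : lam ∈ Icc (0 : ℝ) 1) (hh : 0 ≤ h) (hhδ : h < δ) (a : ℝ) :
    |(∫ t in a..a + lam * h, f t) - lam * ∫ t in a..a + h, f t| ≤ lam * (h * ε) := by
  have hscale : ∫ t in a..a + lam * h, f t = lam * ∫ x in 0..h, f (lam * x + a) := by
    have := intervalIntegral.smul_integral_comp_mul_add (f := f) (a := 0) (b := h) lam a
    rw [mul_zero, zero_add, add_comm (lam * h)] at this
    exact this.symm
  have hshift : ∫ t in a..a + h, f t = ∫ x in 0..h, f (x + a) := by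
    rw [intervalIntegral.integral_comp_add_right]
    ring_nf
  rw [hscale, hshift, ← mul_sub, ← intervalIntegral.integral_sub
    ((by fun_prop : Continuous fun x ↦ f (lam * x + a)).intervalIntegrable _ _)
    ((by fun_prop : Continuous fun x ↦ f (x + a)).intervalIntegrable _ _),
    abs_mul, abs_of_nonneg hlam.1]
  have hbound : ∀ x ∈ uIoc 0 h, ‖f (lam * x + a) - f (x + a)‖ ≤ ε := by
    intro x hx
    rw [uIoc_of_le hh] at hx
    rw [← dist_eq_norm]
    refine (hfδ _ _ ?_).le
    rw [Real.dist_eq, show lam * x + a - (x + a) = -((1 - lam) * x) by ring, abs_neg,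
      abs_of_nonneg (mul_nonneg (sub_nonneg.2 hlam.2) hx.1.le)]
    nlinarith [hx.1, hx.2, hlam.1]
  refine mul_le_mul_of_nonneg_left ?_ hlam.1
  calc |∫ x in 0..h, (f (lam * x + a) - f (x + a))|
      ≤ ε * |h - 0| := intervalIntegral.norm_integral_le_of_norm_le_const hbound
    _ = h * ε := by rw [sub_zero, abs_of_nonneg hh, mul_comm]

theorem abs_integral_periodicWindows_sub_le {S T lam : ℝ} (hST : S ≤ T)
    (hlam : lam ∈ Icc (0 : ℝ) 1) {f : ℝ → ℝ} (hf : Continuous f) {δ ε : ℝ}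
    (hfδ : ∀ x y, dist x y < δ → dist (f x) (f y) < ε) {n : ℕ} (hn : 0 < n)
    (hnδ : (T - S) / n < δ) :
    |(∫ t in periodicWindows S T lam n, f t) - lam * ∫ t in Icc S T, f t|
      ≤ lam * ((T - S) * ε) := by
  set h := (T - S) / n
  have hh : 0 ≤ h := div_nonneg (sub_nonneg.2 hST) n.cast_nonneg
  have hn0 : (n : ℝ) ≠ 0 := by positivity
  set a : ℕ → ℝ := fun k ↦ S + k * h
  have hsucc : ∀ k, a k + h = a (k + 1) := fun k ↦ by simp only [a]; push_cast; ring
  have hwindows : periodicWindows S T lam n = ⋃ k ∈ Finset.range n, Icc (a k) (a k + lam * h) :=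
    iUnion₂_congr fun k _ ↦ by congr 1 <;> ring
  have hwhole : ∫ t in Icc S T, f t = ∑ k ∈ Finset.range n, ∫ t in a k..a k + h, f t := by
    have hlast : a n = T := by simp only [a, h]; field_simp; ring
    simp only [hsucc]
    rw [intervalIntegral.sum_integral_adjacent_intervals fun k _ ↦ hf.intervalIntegrable _ _,
      hlast, show a 0 = S by simp [a], intervalIntegral.integral_of_le hST,
      integral_Icc_eq_integral_Ioc]
  have hstart : ∀ k, a k ≤ a k + lam * h := fun k ↦ le_add_of_nonneg_right (mul_nonneg hlam.1 hh)
  have hgap : ∀ k, a k + lam * h ≤ a (k + 1) := fun k ↦ by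
    rw [← hsucc]; gcongr; exact mul_le_of_le_one_left hh hlam.2
  calc |(∫ t in periodicWindows S T lam n, f t) - lam * ∫ t in Icc S T, f t|
      = |∑ k ∈ Finset.range n,
          ((∫ t in a k..a k + lam * h, f t) - lam * ∫ t in a k..a k + h, f t)| := by
        rw [hwindows, integral_biUnion_Icc_eq_sum hstart hgap fun k ↦ hf.integrableOn_Icc, hwhole,
          Finset.mul_sum, Finset.sum_sub_distrib]
    _ ≤ ∑ k ∈ Finset.range n,
          |(∫ t in a k..a k + lam * h, f t) - lam * ∫ t in a k..a k + h, f t| :=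
        Finset.abs_sum_le_sum_abs _ _
    _ ≤ ∑ _k ∈ Finset.range n, lam * (h * ε) :=
        Finset.sum_le_sum fun k _ ↦ abs_intervalIntegral_window_sub_le hf hfδ hlam hh hnδ _
    _ = lam * ((T - S) * ε) := by
        rw [Finset.sum_const, Finset.card_range, nsmul_eq_mul]; simp only [h]; field_simp

theorem tendsto_integral_periodicWindows_of_uniformContinuous {S T lam : ℝ} (hST : S ≤ T)
    (hlam : lam ∈ Icc (0 : ℝ) 1) {f : ℝ → ℝ} (hf : UniformContinuous f) :
    Tendsto (fun n ↦ ∫ t in periodicWindows S T lam n, f t) atTop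
      (𝓝 (lam * ∫ t in Icc S T, f t)) := by
  rw [Metric.tendsto_nhds]
  intro ε hε
  obtain ⟨δ, hδ, hfδ⟩ := Metric.uniformContinuous_iff.1 hf (ε / (T - S + 1))
    (div_pos hε (by linarith))
  filter_upwards [(tendsto_const_div_atTop_nhds_zero_nat (T - S)).eventually (gt_mem_nhds hδ),
    eventually_gt_atTop 0] with n hnδ hn
  rw [Real.dist_eq]
  refine (abs_integral_periodicWindows_sub_le hST hlam hf.continuous hfδ hn hnδ).trans_lt ?_
  calc lam * ((T - S) * (ε / (T - S + 1))) ≤ (T - S) * (ε / (T - S + 1)) :=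
        mul_le_of_le_one_left (by have := sub_nonneg.2 hST; positivity) hlam.2
    _ < ε := by
        rw [← mul_div_assoc, div_lt_iff₀ (by linarith)]
        nlinarith

/-- Weak* convergence of periodic-window indicator functions to a constant:
for `A_{n,λ} = ⋃_{k=0}^{n-1} [S + k(T-S)/n, S + (k+λ)(T-S)/n]` and any integrable `g` on
`[S,T]`, `∫_{A_{n,λ}} g → λ ∫_S^T g` as `n → ∞`. -/
theorem stmt3 (S T : ℝ) (hST : S < T) (lam : ℝ) (hlam : lam ∈ Set.Icc (0 : ℝ) 1)
    (g : ℝ → ℝ) (hg : IntegrableOn g (Set.Icc S T) volume) :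
    Tendsto
      (fun n : ℕ => ∫ t in (⋃ k ∈ Finset.range n,
        Set.Icc (S + (k : ℝ) * (T - S) / (n : ℝ)) (S + ((k : ℝ) + lam) * (T - S) / (n : ℝ))), g t)
      atTop (nhds (lam * ∫ t in Set.Icc S T, g t)) := by
  have hlim := tendsto_setIntegral_of_forall_hasCompactSupport (μ := volume) (c := lam)
    (fun f hf hf_supp ↦ tendsto_integral_periodicWindows_of_uniformContinuous hST.le hlam
      (hf_supp.uniformContinuous_of_continuous hf))
    (hg.integrable_indicator measurableSet_Icc)
  simp only [smul_eq_mul, setIntegral_indicator measurableSet_Icc, inter_self,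
    inter_eq_left.2 (periodicWindows_subset_Icc hST.le hlam _)] at hlim
  exact hlim
end

section
/- Completeness of the space of measurable selectors under the 'measure of disagreement' metric: Let U : [a,b] ⇝ ℝ^m be a multifunction whose graph {(t,u) : u ∈ U(t)} is ℒ × ℬ measurable, and let (u_n) be a sequence of measurable selectors of U (i.e. u_n is Lebesgue measurable and u_n(t) ∈ U(t) a.e.) that is Cauchy with respect to d(u,v) := meas{ t ∈ [a,b] : u(t) ≠ v(t) }. Then there exists a measurable selector u of U such that d(u_n, u) → 0 as n → ∞. -/
open MeasureTheory Set Filter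
open scoped ENNReal

noncomputable section

/-- The Lebesgue σ-algebra on `ℝ`: the Carathéodory σ-algebra of Lebesgue outer measure. -/
def Leb : MeasurableSpace ℝ := (volume : Measure ℝ).toOuterMeasure.caratheodory

/-- The product σ-algebra ℒ × ℬ of the Lebesgue sets of `ℝ` with the Borel sets of `β`. -/
def LebProd (β : Type*) [MeasurableSpace β] : MeasurableSpace (ℝ × β) :=
  Leb.prod inferInstance

/-!
Choose a subsequence `u ∘ φ` with `μ {u (φ k) ≠ u (φ (k + 1))} < 2⁻¹ ^ k`. Since these measures
are summable, the tails `⋃ j ≥ k, {u (φ j) ≠ u (φ (j + 1))}` have measures tending to `0`, so almost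
every `t` lies outside one of them, and there `u (φ k) t` is eventually constant. Its eventual value
`v t` is an a.e. pointwise limit of measurable selectors, hence a measurable selector, and
`{u (φ k) ≠ v}` lies inside the `k`-th tail. The Cauchy property then carries the convergence from
the subsequence to the whole sequence.
-/

open scoped Topology

namespace MeasureTheory

variable {α β : Type*}

def disagreeTail (w : ℕ → α → β) (k : ℕ) : Set α :=
  ⋃ j, {t | w (j + k) t ≠ w (j + k + 1) t}

lemma eq_of_notMem_disagreeTail {w : ℕ → α → β} {k i : ℕ} {t : α}
    (ht : t ∉ disagreeTail w k) (hi : k ≤ i) : w i t = w k t := by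
  induction i, hi using Nat.le_induction with
  | base => rfl
  | succ i hi ih =>
    have hstep : w (i - k + k) t = w (i - k + k + 1) t :=
      not_not.1 fun h => ht (mem_iUnion_of_mem (i - k) h)
    rw [Nat.sub_add_cancel hi] at hstep
    rw [← hstep, ih]

variable [MeasurableSpace α] {μ : Measure α}

lemma measure_setOf_ne_le_add (f g h : α → β) :
    μ {t | f t ≠ h t} ≤ μ {t | f t ≠ g t} + μ {t | g t ≠ h t} := by
  refine (measure_mono fun t (ht : f t ≠ h t) => ?_).trans (measure_union_le _ _)
  by_contra! hfgh
  simp only [mem_union, mem_ofPred_eq, not_or, not_not] at hfgh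
  exact ht (hfgh.1.trans hfgh.2)

lemma exists_ae_eventually_eq_of_tsum_measure_ne_ne_top {w : ℕ → α → β}
    (hw : ∑' k, μ {t | w k t ≠ w (k + 1) t} ≠ ∞) :
    ∃ v : α → β, (∀ᵐ t ∂μ, ∀ᶠ k in atTop, w k t = v t) ∧
      Tendsto (fun k => μ {t | w k t ≠ v t}) atTop (𝓝 0) := by
  classical
  let v : α → β := fun t => if h : ∃ k, t ∉ disagreeTail w k then w h.choose t else w 0 t
  have hv : ∀ k t, t ∉ disagreeTail w k → v t = w k t := by
    intro k t ht
    have h : ∃ k, t ∉ disagreeTail w k := ⟨k, ht⟩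
    simp only [v, dif_pos h]
    rw [← eq_of_notMem_disagreeTail h.choose_spec (le_max_left _ k),
      eq_of_notMem_disagreeTail ht (le_max_right _ _)]
  have htail : Tendsto (fun k => μ (disagreeTail w k)) atTop (𝓝 0) :=
    tendsto_of_tendsto_of_tendsto_of_le_of_le tendsto_const_nhds
      (ENNReal.tendsto_sum_nat_add _ hw) (fun _ => zero_le) fun _ => measure_iUnion_le _
  refine ⟨v, ?_, ?_⟩
  · have hnull : μ (⋂ k, disagreeTail w k) = 0 :=
      le_antisymm (ge_of_tendsto' htail fun k => measure_mono (iInter_subset _ k)) zero_le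
    filter_upwards [measure_eq_zero_iff_ae_notMem.1 hnull] with t ht
    obtain ⟨k, hk⟩ := not_forall.1 (mt mem_iInter.2 ht)
    filter_upwards [eventually_ge_atTop k] with i hi
    rw [hv k t hk, eq_of_notMem_disagreeTail hk hi]
  · exact tendsto_of_tendsto_of_tendsto_of_le_of_le tendsto_const_nhds htail
      (fun _ => zero_le) fun k =>
        measure_mono fun t ht => by_contra fun hk => ht (hv k t hk).symm

section Cauchy

variable {u : ℕ → α → β}
  (hu : ∀ ε : ℝ≥0∞, 0 < ε → ∃ N : ℕ, ∀ p q : ℕ, N ≤ p → N ≤ q → μ {t | u p t ≠ u q t} < ε)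
include hu

lemma exists_strictMono_tsum_measure_ne_ne_top :
    ∃ φ : ℕ → ℕ, StrictMono φ ∧ ∑' k, μ {t | u (φ k) t ≠ u (φ (k + 1)) t} ≠ ∞ := by
  obtain ⟨φ, hφ, hsmall⟩ := extraction_forall_of_eventually'
    (P := fun k N => ∀ p q, N ≤ p → N ≤ q → μ {t | u p t ≠ u q t} < 2⁻¹ ^ k) fun k => by
      obtain ⟨N, hN⟩ := hu _ (ENNReal.pow_pos (by norm_num : (0 : ℝ≥0∞) < 2⁻¹) k)
      exact ⟨N, fun N' hN' p q hp hq => hN p q (hN'.trans hp) (hN'.trans hq)⟩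
  refine ⟨φ, hφ, ne_top_of_le_ne_top ?_ (ENNReal.tsum_le_tsum fun k =>
    (hsmall k _ _ le_rfl (hφ.monotone k.le_succ)).le)⟩
  rw [ENNReal.tsum_geometric, ENNReal.one_sub_inv_two, inv_inv]
  exact ENNReal.ofNat_ne_top

lemma tendsto_measure_ne_of_tendsto_subseq {φ : ℕ → ℕ} (hφ : Tendsto φ atTop atTop)
    {v : α → β} (hv : Tendsto (fun k => μ {t | u (φ k) t ≠ v t}) atTop (𝓝 0)) :
    Tendsto (fun n => μ {t | u n t ≠ v t}) atTop (𝓝 0) := by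
  rw [ENNReal.tendsto_atTop_zero]
  intro ε hε
  have hε2 : 0 < ε / 2 := ENNReal.half_pos hε.ne'
  obtain ⟨N, hN⟩ := hu _ hε2
  obtain ⟨k, hkN, hkv⟩ := ((hφ.eventually_ge_atTop N).and (hv.eventually_lt_const hε2)).exists
  refine ⟨N, fun n hn => ?_⟩
  calc μ {t | u n t ≠ v t}
      ≤ μ {t | u n t ≠ u (φ k) t} + μ {t | u (φ k) t ≠ v t} := measure_setOf_ne_le_add _ _ _
    _ ≤ ε / 2 + ε / 2 := add_le_add (hN n _ hn hkN).le hkv.le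
    _ = ε := ENNReal.add_halves ε

theorem exists_tendsto_measure_ne_of_cauchy :
    ∃ (φ : ℕ → ℕ) (v : α → β), (∀ᵐ t ∂μ, ∀ᶠ k in atTop, u (φ k) t = v t) ∧
      Tendsto (fun n => μ {t | u n t ≠ v t}) atTop (𝓝 0) := by
  obtain ⟨φ, hφ, hsum⟩ := exists_strictMono_tsum_measure_ne_ne_top hu
  obtain ⟨v, hae, hlim⟩ := exists_ae_eventually_eq_of_tsum_measure_ne_ne_top hsum
  exact ⟨φ, v, hae, tendsto_measure_ne_of_tendsto_subseq hu hφ.tendsto_atTop hlim⟩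

end Cauchy

end MeasureTheory

theorem stmt5_general (a b : ℝ) (m : ℕ)
    (U : ℝ → Set (EuclideanSpace ℝ (Fin m)))
    (u : ℕ → ℝ → EuclideanSpace ℝ (Fin m))
    (hmeas : ∀ n, AEMeasurable (u n) (volume.restrict (Icc a b)))
    (hsel : ∀ n, ∀ᵐ t ∂volume.restrict (Icc a b), u n t ∈ U t)
    (hCauchy : ∀ ε : ℝ≥0∞, 0 < ε → ∃ N : ℕ, ∀ p q : ℕ, N ≤ p → N ≤ q →
      volume {t ∈ Icc a b | u p t ≠ u q t} < ε) :
    ∃ v : ℝ → EuclideanSpace ℝ (Fin m),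
      AEMeasurable v (volume.restrict (Icc a b)) ∧
      (∀ᵐ t ∂volume.restrict (Icc a b), v t ∈ U t) ∧
      Tendsto (fun n => volume {t ∈ Icc a b | u n t ≠ v t}) atTop (nhds 0) := by
  have hrestrict : ∀ f g : ℝ → EuclideanSpace ℝ (Fin m),
      volume {t ∈ Icc a b | f t ≠ g t} = volume.restrict (Icc a b) {t | f t ≠ g t} := by
    intro f g
    rw [Measure.restrict_apply' measurableSet_Icc, inter_comm]
    rfl
  simp only [hrestrict] at hCauchy ⊢
  obtain ⟨φ, v, hφv, hv⟩ := exists_tendsto_measure_ne_of_cauchy hCauchy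
  refine ⟨v, ?_, ?_, hv⟩
  · exact aemeasurable_of_tendsto_metrizable_ae' (fun k => hmeas (φ k))
      (hφv.mono fun _ => tendsto_nhds_of_eventually_eq)
  · filter_upwards [hφv, ae_all_iff.2 fun k => hsel (φ k)] with t hφt hsel_t
    obtain ⟨k, hk⟩ := hφt.exists
    exact hk ▸ hsel_t k

/-- Completeness of the space of measurable selectors of a multifunction with ℒ × ℬ
measurable graph, under the "measure of disagreement" metric
`d(u,v) = meas {t ∈ [a,b] : u t ≠ v t}`. -/
theorem stmt5 (a b : ℝ) (hab : a ≤ b) (m : ℕ)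
    (U : ℝ → Set (EuclideanSpace ℝ (Fin m)))
    (hGraph : MeasurableSet[LebProd (EuclideanSpace ℝ (Fin m))]
      {p : ℝ × EuclideanSpace ℝ (Fin m) | p.1 ∈ Icc a b ∧ p.2 ∈ U p.1})
    (u : ℕ → ℝ → EuclideanSpace ℝ (Fin m))
    (hmeas : ∀ n, AEMeasurable (u n) (volume.restrict (Icc a b)))
    (hsel : ∀ n, ∀ᵐ t ∂volume.restrict (Icc a b), u n t ∈ U t)
    (hCauchy : ∀ ε : ℝ≥0∞, 0 < ε → ∃ N : ℕ, ∀ p q : ℕ, N ≤ p → N ≤ q →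
      volume {t ∈ Icc a b | u p t ≠ u q t} < ε) :
    ∃ v : ℝ → EuclideanSpace ℝ (Fin m),
      AEMeasurable v (volume.restrict (Icc a b)) ∧
      (∀ᵐ t ∂volume.restrict (Icc a b), v t ∈ U t) ∧
      Tendsto (fun n => volume {t ∈ Icc a b | u n t ≠ v t}) atTop (nhds 0) :=
  stmt5_general a b m U u hmeas hsel hCauchy
end
end
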